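/- Let β > 0, let v_1,…,v_N > 0 and ρ_1,…,ρ_N ∈ [0,1], and define f(η) = Σ_{i=1}^{N} v_i h(ρ_i,β,η) − Σ_{i=1}^{N} v_i ρ_i. If at least one ρ_i lies in the open interval (0,1), then f(1) < 0. -/

import Mathlib

/-!
At `η = 1` the projection is `h(ρ) = (tanh β - tanh ((1 - ρ) β)) / tanh β`, so `h(ρ) ≤ ρ` is the
chord inequality `t tanh β ≤ tanh (t β)` for `t = 1 - ρ ∈ [0, 1]`. It holds, strictly for
`t ∈ (0, 1)`, because `tanh` is strictly concave on `[0, ∞)`; one strict term makes the weighted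
sum strictly smaller.
-/

/-- The tanh-based Heaviside projection. -/
noncomputable def heavisideProj (ρ β η : ℝ) : ℝ :=
  (Real.tanh (β * η) + Real.tanh (β * (ρ - η))) /
    (Real.tanh (β * η) + Real.tanh (β * (1 - η)))

namespace Real

theorem hasDerivAt_tanh (x : ℝ) : HasDerivAt tanh (cosh x ^ 2)⁻¹ x := by
  have h := (hasDerivAt_sinh x).div (hasDerivAt_cosh x) (cosh_pos x).ne'
  rw [← sq, ← sq, cosh_sq_sub_sinh_sq, one_div] at h
  exact h.congr_of_eventuallyEq (.of_forall tanh_eq_sinh_div_cosh)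

theorem deriv_tanh : deriv tanh = fun x => (cosh x ^ 2)⁻¹ :=
  funext fun x => (hasDerivAt_tanh x).deriv

theorem tanh_pos {x : ℝ} (hx : 0 < x) : 0 < tanh x := by
  rw [tanh_eq_sinh_div_cosh]
  exact div_pos (sinh_pos_iff.2 hx) (cosh_pos x)

theorem strictConcaveOn_tanh : StrictConcaveOn ℝ (Set.Ici 0) tanh := by
  refine StrictAntiOn.strictConcaveOn_of_deriv (convex_Ici 0)
    (fun x _ => (hasDerivAt_tanh x).continuousAt.continuousWithinAt) ?_
  rw [deriv_tanh, interior_Ici]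
  intro x hx y hy hxy
  have hcosh : cosh x < cosh y := cosh_strictMonoOn (Set.mem_Ici.2 hx.le) (Set.mem_Ici.2 hy.le) hxy
  dsimp only
  gcongr

theorem mul_tanh_le_tanh_mul {x t : ℝ} (hx : 0 ≤ x) (ht : t ∈ Set.Icc (0 : ℝ) 1) :
    t * tanh x ≤ tanh (t * x) := by
  have := strictConcaveOn_tanh.concaveOn.2 (Set.self_mem_Ici) hx (sub_nonneg.2 ht.2) ht.1
    (sub_add_cancel 1 t)
  simpa [tanh_zero] using this

theorem mul_tanh_lt_tanh_mul {x t : ℝ} (hx : 0 < x) (ht : t ∈ Set.Ioo (0 : ℝ) 1) :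
    t * tanh x < tanh (t * x) := by
  have := strictConcaveOn_tanh.2 (Set.self_mem_Ici) hx.le hx.ne (sub_pos.2 ht.2) ht.1
    (sub_add_cancel 1 t)
  simpa [tanh_zero] using this

end Real

theorem heavisideProj_one (ρ β : ℝ) :
    heavisideProj ρ β 1 = (Real.tanh β - Real.tanh ((1 - ρ) * β)) / Real.tanh β := by
  rw [heavisideProj, show (1 - ρ) * β = -(β * (ρ - 1)) by ring, Real.tanh_neg, sub_neg_eq_add,
    sub_self, mul_zero, Real.tanh_zero, mul_one, add_zero]

theorem heavisideProj_one_le {ρ β : ℝ} (hβ : 0 < β) (hρ : ρ ∈ Set.Icc (0 : ℝ) 1) :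
    heavisideProj ρ β 1 ≤ ρ := by
  rw [heavisideProj_one, div_le_iff₀ (Real.tanh_pos hβ)]
  have := Real.mul_tanh_le_tanh_mul hβ.le (t := 1 - ρ) ⟨by linarith [hρ.2], by linarith [hρ.1]⟩
  linarith

theorem heavisideProj_one_lt {ρ β : ℝ} (hβ : 0 < β) (hρ : ρ ∈ Set.Ioo (0 : ℝ) 1) :
    heavisideProj ρ β 1 < ρ := by
  rw [heavisideProj_one, div_lt_iff₀ (Real.tanh_pos hβ)]
  have := Real.mul_tanh_lt_tanh_mul hβ (t := 1 - ρ) ⟨by linarith [hρ.2], by linarith [hρ.1]⟩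
  linarith

theorem volume_function_neg_at_one (N : ℕ) (β : ℝ) (hβ : 0 < β)
    (v ρ : Fin N → ℝ) (hv : ∀ i, 0 < v i) (hρ : ∀ i, ρ i ∈ Set.Icc (0:ℝ) 1)
    (f : ℝ → ℝ)
    (hf : ∀ η, f η = (∑ i, v i * heavisideProj (ρ i) β η) - ∑ i, v i * ρ i)
    (hmid : ∃ i, ρ i ∈ Set.Ioo (0:ℝ) 1) :
    f 1 < 0 := by
  obtain ⟨j, hj⟩ := hmid
  rw [hf 1, sub_neg]
  refine Finset.sum_lt_sum (fun i _ => ?_) ⟨j, Finset.mem_univ j, ?_⟩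
  · exact mul_le_mul_of_nonneg_left (heavisideProj_one_le hβ (hρ i)) (hv i).le
  · exact mul_lt_mul_of_pos_left (heavisideProj_one_lt hβ hj) (hv j)
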